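/- arXiv:2005.00888 — 6 statements merged into one kernel-verified Lean document; each statement's English description precedes it below -/
import Mathlib

section
/- Let A be a commutative ℚ-algebra with a derivation δ, extend δ coefficientwise to a derivation on A[[t]] (still denoted δ), and let ev : A[[t]] → A be evaluation at 0. Then the Taylor map T^{ev}_{δ + d/dt} : A[[t]] → A[[t]], f ↦ Σ_{k≥0} ev((δ + d/dt)^k(f))/k! · t^k, is a ring isomorphism whose compositional inverse is T^{ev}_{−δ + d/dt}. -/
/-- The coefficientwise extension of a map `δ : A → A` to `A[[t]]`. -/
noncomputable def coeffwiseDer {A : Type*} [CommRing A] (δ : A → A) :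
    PowerSeries A → PowerSeries A :=
  fun f => PowerSeries.mk fun n => δ (PowerSeries.coeff n f)

/-- The Taylor map `T^{ev}_D(f) = Σ_k ev(D^k f)/k! · t^k` of the evaluation map
`ev : A[[t]] → A` at `0`, for a map `D` on `A[[t]]`. -/
noncomputable def taylorEv {A : Type*} [CommRing A] [Algebra ℚ A]
    (D : PowerSeries A → PowerSeries A) : PowerSeries A → PowerSeries A :=
  fun f => PowerSeries.mk fun k =>
    (k.factorial : ℚ)⁻¹ • PowerSeries.constantCoeff (D^[k] f)

/-! Write `D = δ + d/dt` and `T = T^{ev}_D`. Then `ev ∘ T = ev` and `d/dt ∘ T = T ∘ D`, so the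
Leibniz rules for `D` and `d/dt` give `T (f * g) = T f * T g` coefficient by coefficient. Since `δ`
commutes with `d/dt`, it commutes with `D` and hence with `T`; therefore
`(-δ + d/dt) ∘ T = T ∘ d/dt`, and `T^{ev}_{-δ + d/dt} ∘ T = T^{ev}_{d/dt}`, which is the identity
by Taylor's formula at `0`. Replacing `δ` by `-δ` gives the other composition. -/

section Coeffwise

open PowerSeries

variable {A : Type*} [CommRing A]

theorem coeff_coeffwiseDer (d : A → A) (f : A⟦X⟧) (n : ℕ) :
    coeff n (coeffwiseDer d f) = d (coeff n f) :=
  coeff_mk _ _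

theorem constantCoeff_coeffwiseDer (d : A → A) (f : A⟦X⟧) :
    constantCoeff (coeffwiseDer d f) = d (constantCoeff f) := by
  simp only [← coeff_zero_eq_constantCoeff_apply, coeff_coeffwiseDer]

theorem coeffwiseDer_add {F : Type*} [FunLike F A A] [AddHomClass F A A] (d : F) (f g : A⟦X⟧) :
    coeffwiseDer d (f + g) = coeffwiseDer d f + coeffwiseDer d g := by
  ext n
  simp only [coeff_coeffwiseDer, map_add]

theorem coeffwiseDer_neg (d : A → A) (f : A⟦X⟧) :
    coeffwiseDer (fun a => -d a) f = -coeffwiseDer d f := by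
  ext n
  simp only [coeff_coeffwiseDer, map_neg]

theorem coeffwiseDer_mul (δ : Derivation ℤ A A) (f g : A⟦X⟧) :
    coeffwiseDer δ (f * g) = coeffwiseDer δ f * g + f * coeffwiseDer δ g := by
  ext n
  simp only [coeff_coeffwiseDer, coeff_mul, map_sum, map_add, Derivation.leibniz, smul_eq_mul,
    ← Finset.sum_add_distrib]
  exact Finset.sum_congr rfl fun p _ => by ring

noncomputable def coeffwiseDerivation (δ : Derivation ℤ A A) : Derivation ℤ A⟦X⟧ A⟦X⟧ :=
  Derivation.mk' (AddMonoidHom.mk' (coeffwiseDer δ) (coeffwiseDer_add δ)).toIntLinearMap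
    fun f g => by
      rw [smul_eq_mul, smul_eq_mul, mul_comm g]
      exact (coeffwiseDer_mul δ f g).trans (add_comm _ _)

theorem commute_coeffwiseDer_derivative {F : Type*} [FunLike F A A] [AddMonoidHomClass F A A]
    (d : F) : Function.Commute (coeffwiseDer d) (d⁄dX A) := by
  intro f
  ext n
  simp only [coeff_coeffwiseDer, coeff_derivative, ← Nat.cast_succ, ← nsmul_eq_mul', map_nsmul]

noncomputable def coeffwiseAddDerivative (δ : Derivation ℤ A A) : Derivation ℤ A⟦X⟧ A⟦X⟧ :=
  coeffwiseDerivation δ + (d⁄dX A).restrictScalars ℤ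

theorem coeffwiseAddDerivative_apply (δ : Derivation ℤ A A) (f : A⟦X⟧) :
    coeffwiseAddDerivative δ f = coeffwiseDer δ f + d⁄dX A f :=
  rfl

theorem commute_coeffwiseDer_coeffwiseAddDerivative (δ : Derivation ℤ A A) :
    Function.Commute (coeffwiseDer δ) (coeffwiseAddDerivative δ) := by
  intro f
  rw [coeffwiseAddDerivative_apply, coeffwiseAddDerivative_apply, coeffwiseDer_add,
    commute_coeffwiseDer_derivative δ f]

end Coeffwise

section Taylor

open PowerSeries Nat

variable {A : Type*} [CommRing A] [Algebra ℚ A]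

theorem coeff_taylorEv (D : A⟦X⟧ → A⟦X⟧) (f : A⟦X⟧) (k : ℕ) :
    coeff k (taylorEv D f) = (k ! : ℚ)⁻¹ • constantCoeff (D^[k] f) :=
  coeff_mk _ _

theorem constantCoeff_taylorEv (D : A⟦X⟧ → A⟦X⟧) (f : A⟦X⟧) :
    constantCoeff (taylorEv D f) = constantCoeff f := by
  simpa [coeff_zero_eq_constantCoeff] using coeff_taylorEv D f 0

theorem derivative_taylorEv (D : A⟦X⟧ → A⟦X⟧) (f : A⟦X⟧) :
    d⁄dX A (taylorEv D f) = taylorEv D (D f) := by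
  ext n
  rw [coeff_derivative, coeff_taylorEv, coeff_taylorEv, ← Function.iterate_succ_apply,
    ← Nat.cast_succ, ← nsmul_eq_mul', ← Nat.cast_smul_eq_nsmul ℚ, smul_smul, Nat.factorial_succ,
    Nat.cast_mul, mul_inv, ← mul_assoc, mul_inv_cancel₀ (by positivity), one_mul]

theorem taylorEv_add {F : Type*} [FunLike F A⟦X⟧ A⟦X⟧] [AddHomClass F A⟦X⟧ A⟦X⟧] (D : F)
    (f g : A⟦X⟧) :
    taylorEv D (f + g) = taylorEv D f + taylorEv D g := by
  ext k
  simp only [coeff_taylorEv, iterate_map_add, map_add, smul_add]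

theorem taylorEv_one (D : Derivation ℤ A⟦X⟧ A⟦X⟧) : taylorEv D 1 = 1 := by
  ext (_ | n)
  · simp [coeff_zero_eq_constantCoeff, constantCoeff_taylorEv]
  · rw [coeff_taylorEv, Function.iterate_succ_apply, D.map_one_eq_zero,
      Function.iterate_fixed D.map_zero]
    simp

theorem coeff_succ_eq_of_coeff_derivative_eq {R : Type*} [CommRing R] [IsAddTorsionFree R]
    {f g : R⟦X⟧} {n : ℕ} (h : coeff n (d⁄dX R f) = coeff n (d⁄dX R g)) :
    coeff (n + 1) f = coeff (n + 1) g := by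
  rw [coeff_derivative, coeff_derivative, ← Nat.cast_succ, ← nsmul_eq_mul', ← nsmul_eq_mul'] at h
  exact nsmul_right_injective n.succ_ne_zero h

theorem taylorEv_mul (D : Derivation ℤ A⟦X⟧ A⟦X⟧) (f g : A⟦X⟧) :
    taylorEv D (f * g) = taylorEv D f * taylorEv D g := by
  have := IsAddTorsionFree.of_module_rat A
  ext n
  induction n generalizing f g with
  | zero => simp [coeff_zero_eq_constantCoeff, constantCoeff_taylorEv]
  | succ n ih =>
    apply coeff_succ_eq_of_coeff_derivative_eq
    rw [derivative_taylorEv, D.leibniz, Derivation.leibniz, derivative_taylorEv,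
      derivative_taylorEv, smul_eq_mul, smul_eq_mul, smul_eq_mul, smul_eq_mul, taylorEv_add D,
      map_add, map_add, ih, ih]

theorem commute_coeffwiseDer_taylorEv {F : Type*} [FunLike F A A] [AddMonoidHomClass F A A]
    (d : F) {D : A⟦X⟧ → A⟦X⟧} (h : Function.Commute (coeffwiseDer d) D) :
    Function.Commute (coeffwiseDer d) (taylorEv D) := by
  intro f
  ext k
  rw [coeff_coeffwiseDer, coeff_taylorEv, coeff_taylorEv, map_rat_smul,
    ← constantCoeff_coeffwiseDer d, (h.iterate_right k).eq]

theorem taylorEv_derivative (f : A⟦X⟧) : taylorEv (d⁄dX A) f = f := by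
  ext n
  rw [coeff_taylorEv, constantCoeff_iterate_derivative, ← nsmul_eq_mul,
    ← Nat.cast_smul_eq_nsmul ℚ, smul_smul, inv_mul_cancel₀ (by positivity), one_smul]

theorem taylorEv_apply_of_semiconj {T D E : A⟦X⟧ → A⟦X⟧}
    (hT : ∀ f, constantCoeff (T f) = constantCoeff f) (h : Function.Semiconj T D E)
    (f : A⟦X⟧) : taylorEv E (T f) = taylorEv D f := by
  ext k
  rw [coeff_taylorEv, coeff_taylorEv, ← (h.iterate_right k).eq, hT]

theorem semiconj_taylorEv_coeffwiseAddDerivative (δ : Derivation ℤ A A) :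
    Function.Semiconj (taylorEv (coeffwiseAddDerivative δ)) (d⁄dX A)
      (coeffwiseAddDerivative (-δ)) := by
  intro f
  have hδ := commute_coeffwiseDer_taylorEv δ (commute_coeffwiseDer_coeffwiseAddDerivative δ) f
  calc taylorEv (coeffwiseAddDerivative δ) (d⁄dX A f)
      = -taylorEv (coeffwiseAddDerivative δ) (coeffwiseDer δ f) +
          taylorEv (coeffwiseAddDerivative δ) (coeffwiseAddDerivative δ f) := by
        rw [coeffwiseAddDerivative_apply, taylorEv_add, neg_add_cancel_left]
    _ = coeffwiseAddDerivative (-δ) (taylorEv (coeffwiseAddDerivative δ) f) := by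
        rw [← derivative_taylorEv, ← hδ, coeffwiseAddDerivative_apply, ← coeffwiseDer_neg]
        rfl

theorem taylorEv_neg_taylorEv (δ : Derivation ℤ A A) (f : A⟦X⟧) :
    taylorEv (coeffwiseAddDerivative (-δ)) (taylorEv (coeffwiseAddDerivative δ) f) = f := by
  rw [taylorEv_apply_of_semiconj (constantCoeff_taylorEv _)
    (semiconj_taylorEv_coeffwiseAddDerivative δ), taylorEv_derivative]

end Taylor

/-- `T^{ev}_{δ + d/dt}` is a ring isomorphism of `A[[t]]` with compositional inverse
`T^{ev}_{−δ + d/dt}`. -/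
theorem taylorEv_ring_iso {A : Type*} [CommRing A] [Algebra ℚ A]
    (δ : Derivation ℤ A A) :
    (∀ f g : PowerSeries A,
      taylorEv (fun f => coeffwiseDer (⇑δ) f + PowerSeries.derivativeFun f) (f + g) =
        taylorEv (fun f => coeffwiseDer (⇑δ) f + PowerSeries.derivativeFun f) f +
          taylorEv (fun f => coeffwiseDer (⇑δ) f + PowerSeries.derivativeFun f) g) ∧
    (∀ f g : PowerSeries A,
      taylorEv (fun f => coeffwiseDer (⇑δ) f + PowerSeries.derivativeFun f) (f * g) =
        taylorEv (fun f => coeffwiseDer (⇑δ) f + PowerSeries.derivativeFun f) f *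
          taylorEv (fun f => coeffwiseDer (⇑δ) f + PowerSeries.derivativeFun f) g) ∧
    (taylorEv (fun f => coeffwiseDer (⇑δ) f + PowerSeries.derivativeFun f) 1 = 1) ∧
    (taylorEv (fun f => coeffwiseDer (fun a => -δ a) f + PowerSeries.derivativeFun f) ∘
        taylorEv (fun f => coeffwiseDer (⇑δ) f + PowerSeries.derivativeFun f) = id) ∧
    (taylorEv (fun f => coeffwiseDer (⇑δ) f + PowerSeries.derivativeFun f) ∘
        taylorEv (fun f => coeffwiseDer (fun a => -δ a) f + PowerSeries.derivativeFun f)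
      = id) := by
  have hD : (fun f => coeffwiseDer (⇑δ) f + PowerSeries.derivativeFun f) =
      ⇑(coeffwiseAddDerivative δ) := rfl
  have hE : (fun f => coeffwiseDer (fun a => -δ a) f + PowerSeries.derivativeFun f) =
      ⇑(coeffwiseAddDerivative (-δ)) := rfl
  rw [hD, hE]
  refine ⟨taylorEv_add _, taylorEv_mul _, taylorEv_one _, funext (taylorEv_neg_taylorEv δ), ?_⟩
  funext f
  simpa only [Function.comp_apply, id_eq, neg_neg] using taylorEv_neg_taylorEv (-δ) f
end

section
/- Let (A, δ) be a commutative differential ring, (B, ∂) a differential ℚ-algebra, φ : A → B a ring homomorphism, and R ⊆ A a differential subring such that φ restricted to R is a differential ring homomorphism (i.e., φ(δ(r)) = ∂(φ(r)) for r ∈ R). Then the twisted Taylor morphism T*_φ : A → B[[t]] satisfies T*_φ(r) = φ(r) (as a constant power series) for all r ∈ R. -/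
/-!
On `R` the morphism `φ` intertwines `δ` and `∂`, hence also all their iterates, so every term
`∂^{α−β}(φ(δ^β r))` of the `α`-th coefficient collapses to `∂^α(φ r)`. What remains is
`∂^α(φ r)` times the alternating binomial sum `Σ_β (−1)^{α−β} (α choose β) = (1 − 1)^α = 0^α`,
which leaves only the constant coefficient `φ r`.
-/

/-- The twisted Taylor morphism `T*_φ(a) = Σ_α b_α t^α` with
`b_α = (1/α!) Σ_{β≤α} (−1)^{α−β} (α choose β) ∂^{α−β}(φ(δ^β(a)))`. -/
noncomputable def twistedTaylor {A B : Type*} [CommRing A] [CommRing B] [Algebra ℚ B]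
    (δ : A → A) (d : B → B) (φ : A →+* B) : A → PowerSeries B :=
  fun a => PowerSeries.mk fun α => (α.factorial : ℚ)⁻¹ •
    ∑ β ∈ Finset.range (α + 1),
      ((-1 : B) ^ (α - β) * (α.choose β : B)) * d^[α - β] (φ (δ^[β] a))

open Finset

theorem Set.MapsTo.iterate_map_eq_iterate {α β : Type*} {f : α → α} {g : β → β} {h : α → β}
    {s : Set α} (hf : Set.MapsTo f s s) (hfg : ∀ x ∈ s, h (f x) = g (h x)) {x : α} (hx : x ∈ s)
    (n : ℕ) : h (f^[n] x) = g^[n] (h x) := by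
  induction n with
  | zero => rfl
  | succ n ih =>
    rw [Function.iterate_succ_apply', Function.iterate_succ_apply', hfg _ (hf.iterate n hx), ih]

theorem sum_range_neg_one_pow_sub_mul_choose (R : Type*) [CommRing R] (n : ℕ) :
    ∑ m ∈ range (n + 1), (-1 : R) ^ (n - m) * (n.choose m : R) = 0 ^ n := by
  simpa using (add_pow (1 : R) (-1) n).symm

theorem twistedTaylor_eq_C_of_map_iterate {A B : Type*} [CommRing A] [CommRing B] [Algebra ℚ B]
    {δ : A → A} {d : B → B} {φ : A →+* B} {a : A}
    (hcomm : ∀ n, φ (δ^[n] a) = d^[n] (φ a)) :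
    twistedTaylor δ d φ a = PowerSeries.C (φ a) := by
  ext α
  have hterm : ∀ β ∈ range (α + 1), (-1 : B) ^ (α - β) * (α.choose β : B) * d^[α - β] (φ (δ^[β] a))
      = (-1 : B) ^ (α - β) * (α.choose β : B) * d^[α] (φ a) := by
    intro β hβ
    rw [hcomm, ← Function.iterate_add_apply, Nat.sub_add_cancel (mem_range_succ_iff.mp hβ)]
  rw [twistedTaylor, PowerSeries.coeff_mk, PowerSeries.coeff_C, sum_congr rfl hterm, ← sum_mul,
    sum_range_neg_one_pow_sub_mul_choose]
  rcases Nat.eq_zero_or_pos α with rfl | hα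
  · simp
  · simp [zero_pow hα.ne', hα.ne']

/-- If `R` is a differential subring of `A` on which `φ` is a differential ring
homomorphism, then the twisted Taylor morphism `T*_φ` agrees with `φ` on `R`
(as constant power series). -/
theorem twistedTaylor_extends_differential_restriction {A B : Type*} [CommRing A]
    [CommRing B] [Algebra ℚ B] (δ : Derivation ℤ A A) (d : Derivation ℤ B B)
    (φ : A →+* B) (R : Subring A) (hRδ : ∀ r ∈ R, δ r ∈ R)
    (hφ : ∀ r ∈ R, φ (δ r) = d (φ r)) :
    ∀ r ∈ R, twistedTaylor (⇑δ) (⇑d) φ r = PowerSeries.C (R := B) (φ r) :=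
  fun _ hr => twistedTaylor_eq_C_of_map_iterate
    (Set.MapsTo.iterate_map_eq_iterate (s := (R : Set A)) hRδ hφ hr)
end

section
/- Let (F, δ) be a differential field of characteristic 0 such that for all x ∈ F and all positive integers n, δ(x) = n·x implies x = 0. Let F(t) be the rational function field with the derivation extending δ by δ(t) = 1. Then for all y ∈ F(t) and all positive integers n, δ(y) = n·y implies y = 0. -/
/-!
Write `y = p / q` in lowest terms with `q` monic, and let `D` be the derivation of `F[X]`
extending `δ` with `D X = 1`. Then `d y = n y` becomes `p · D q = q · (D p - n p)`, so `q ∣ D q`.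
Since `q` is monic, its leading coefficient is killed by `δ` and `deg D q < deg q`; hence `D q = 0`
and `D p = n p`. Comparing top coefficients gives `δ (lc p) = n · lc p`, so `lc p = 0` and `p = 0`.
-/

open Polynomial

namespace Polynomial

variable {R : Type*} [CommRing R] (δ : Derivation ℤ R R)

noncomputable def extendDerivation (p : R[X]) : R[X] :=
  derivative p + p.sum fun i a => monomial i (δ a)

theorem coeff_extendDerivation (p : R[X]) (j : ℕ) :
    (extendDerivation δ p).coeff j = p.coeff (j + 1) * (j + 1) + δ (p.coeff j) := by
  rw [extendDerivation, coeff_add, coeff_derivative, coeff_sum, sum_def]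
  simp only [coeff_monomial]
  rw [Finset.sum_eq_single j (fun b _ hb => if_neg hb)]
  · rw [if_pos rfl]
  · intro hj
    rw [if_pos rfl, notMem_support_iff.mp hj, map_zero]

theorem extendDerivation_add (p q : R[X]) :
    extendDerivation δ (p + q) = extendDerivation δ p + extendDerivation δ q := by
  ext j
  simp only [coeff_extendDerivation, coeff_add, map_add]
  ring

theorem extendDerivation_monomial (i : ℕ) (a : R) :
    extendDerivation δ (monomial i a) = monomial (i - 1) (a * i) + monomial i (δ a) := by
  rw [extendDerivation, derivative_monomial,
    sum_monomial_index _ _ (by rw [map_zero, monomial_zero_right])]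

theorem coeff_extendDerivation_natDegree (p : R[X]) :
    (extendDerivation δ p).coeff p.natDegree = δ p.leadingCoeff := by
  rw [coeff_extendDerivation, coeff_eq_zero_of_natDegree_lt (Nat.lt_succ_self _), zero_mul,
    zero_add, leadingCoeff]

theorem degree_extendDerivation_lt [Nontrivial R] {q : R[X]} (hq : q.Monic) :
    (extendDerivation δ q).degree < q.degree := by
  rw [degree_eq_natDegree hq.ne_zero, degree_lt_iff_coeff_zero]
  intro m hm
  obtain rfl | hlt := (show q.natDegree ≤ m by exact_mod_cast hm).eq_or_lt
  · rw [coeff_extendDerivation_natDegree, hq.leadingCoeff, Derivation.map_one_eq_zero]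
  · rw [coeff_extendDerivation, coeff_eq_zero_of_natDegree_lt hlt,
      coeff_eq_zero_of_natDegree_lt (hlt.trans (Nat.lt_succ_self m)), map_zero, zero_mul, zero_add]

theorem extendDerivation_eq_zero_of_dvd [Nontrivial R] [NoZeroDivisors R] {q : R[X]}
    (hq : q.Monic) (hdvd : q ∣ extendDerivation δ q) : extendDerivation δ q = 0 :=
  eq_zero_of_dvd_of_degree_lt hdvd (degree_extendDerivation_lt δ hq)

theorem eq_zero_of_extendDerivation_eq_nsmul
    (hR : ∀ (x : R) (n : ℕ), 0 < n → δ x = n • x → x = 0) {p : R[X]} {n : ℕ} (hn : 0 < n)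
    (hp : extendDerivation δ p = n • p) : p = 0 := by
  refine leadingCoeff_eq_zero.mp (hR _ n hn ?_)
  rw [← coeff_extendDerivation_natDegree, hp, coeff_smul, leadingCoeff]

end Polynomial

namespace RatFunc

variable {F : Type*} [Field F] (δ : Derivation ℤ F F) (d : Derivation ℤ (RatFunc F) (RatFunc F))

theorem derivation_algebraMap_polynomial
    (hext : ∀ a : F, d (algebraMap F (RatFunc F) a) = algebraMap F (RatFunc F) (δ a))
    (ht : d X = 1) (p : F[X]) :
    d (algebraMap F[X] (RatFunc F) p) = algebraMap F[X] (RatFunc F) (extendDerivation δ p) := by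
  induction p using Polynomial.induction_on' with
  | add p q hp hq => rw [map_add, map_add, hp, hq, extendDerivation_add, map_add]
  | monomial i a =>
    rw [extendDerivation_monomial]
    simp only [← C_mul_X_pow_eq_monomial, map_add, map_mul, map_pow, algebraMap_C, algebraMap_X,
      ← algebraMap_eq_C, Derivation.leibniz, Derivation.leibniz_pow, hext, ht, map_natCast,
      smul_eq_mul, nsmul_eq_mul]
    ring

theorem num_mul_extendDerivation_denom
    (hd : ∀ p : F[X], d (algebraMap F[X] (RatFunc F) p) =
      algebraMap F[X] (RatFunc F) (extendDerivation δ p))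
    {y : RatFunc F} {n : ℕ} (hy : d y = n • y) :
    y.num * extendDerivation δ y.denom = y.denom * (extendDerivation δ y.num - n • y.num) := by
  have hq : algebraMap F[X] (RatFunc F) y.denom ≠ 0 := algebraMap_ne_zero y.denom_ne_zero
  have hyq := (div_eq_iff hq).mp (num_div_denom y)
  have hdyq := congrArg d hyq
  rw [Derivation.leibniz, hy, hd, hd] at hdyq
  apply IsFractionRing.injective F[X] (RatFunc F)
  simp only [map_mul, map_sub, map_natCast, nsmul_eq_mul, smul_eq_mul] at hdyq ⊢
  set Q := algebraMap F[X] (RatFunc F) y.denom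
  linear_combination (algebraMap F[X] (RatFunc F) (extendDerivation δ y.denom) + n * Q) * hyq
    - Q * hdyq

end RatFunc

theorem no_nontrivial_solution_ratFunc_general {F : Type*} [Field F]
    (δ : Derivation ℤ F F)
    (hF : ∀ (x : F) (n : ℕ), 0 < n → δ x = n • x → x = 0)
    (d : Derivation ℤ (RatFunc F) (RatFunc F))
    (hext : ∀ a : F, d (algebraMap F (RatFunc F) a) = algebraMap F (RatFunc F) (δ a))
    (ht : d RatFunc.X = 1) :
    ∀ (y : RatFunc F) (n : ℕ), 0 < n → d y = n • y → y = 0 := by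
  intro y n hn hdy
  have hd := RatFunc.derivation_algebraMap_polynomial δ d hext ht
  have hcross := RatFunc.num_mul_extendDerivation_denom δ d hd hdy
  have hDq : extendDerivation δ y.denom = 0 := extendDerivation_eq_zero_of_dvd δ y.monic_denom
    (y.isCoprime_num_denom.symm.dvd_of_dvd_mul_left ⟨_, hcross⟩)
  have hDp : extendDerivation δ y.num = n • y.num := by
    rwa [hDq, mul_zero, eq_comm, mul_eq_zero, or_iff_right y.denom_ne_zero, sub_eq_zero] at hcross
  rw [← RatFunc.num_div_denom y, eq_zero_of_extendDerivation_eq_nsmul δ hF hn hDp, map_zero,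
    zero_div]

/-- If in a differential field `(F, δ)` of characteristic 0 the equation `δx = n·x`
(`n` a positive integer) has only the trivial solution, then the same holds in the
rational function field `F(t)` with the derivation extending `δ` and sending `t` to 1. -/
theorem no_nontrivial_solution_ratFunc {F : Type*} [Field F] [CharZero F]
    (δ : Derivation ℤ F F)
    (hF : ∀ (x : F) (n : ℕ), 0 < n → δ x = n • x → x = 0)
    (d : Derivation ℤ (RatFunc F) (RatFunc F))
    (hext : ∀ a : F, d (algebraMap F (RatFunc F) a) = algebraMap F (RatFunc F) (δ a))
    (ht : d RatFunc.X = 1) :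
    ∀ (y : RatFunc F) (n : ℕ), 0 < n → d y = n • y → y = 0 :=
  no_nontrivial_solution_ratFunc_general δ hF d hext ht
end

section
/- Let (F, δ) be a differential field of characteristic 0 whose algebraic closure F^alg (with the unique extended derivation) has the same field of constants as F. Suppose that for all x ∈ F and all positive integers n, δ(x) = n·x implies x = 0. Then for all α ∈ F^alg and all positive integers n, δ(α) = n·α implies α = 0. -/
/-!
Let `p` be the minimal polynomial of `α`, of degree `m`, with `α′ = a α`. Differentiating
`p(α) = 0` shows that `q = pᵟ + a (X p' - m p)`, where `pᵟ` applies the derivation to the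
coefficients, vanishes at `α`; its coefficient of `Xʲ` is `(pⱼ)′ + (j - m) a pⱼ`, so `p` being
monic gives `deg q < m` and hence `q = 0`. The constant coefficient then reads
`(p₀)′ = m a p₀`; for `a = n` the hypothesis on `F` (with `m n > 0`) forces `p₀ = 0`, i.e. `α = 0`.
-/

open Polynomial Differential

theorem Polynomial.coeff_X_mul_derivative {R : Type*} [Semiring R] (p : R[X]) (j : ℕ) :
    (X * derivative p).coeff j = j * p.coeff j := by
  cases j with
  | zero => simp
  | succ j => rw [coeff_X_mul, coeff_derivative, ← Nat.cast_succ, Nat.cast_comm]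

namespace Differential

variable {F K : Type*} [Field F] [CommRing K] [Algebra F K] [Differential F] [Differential K]
  [DifferentialAlgebra F K]

theorem deriv_coeff_zero_minpoly {α : K} (hα : IsIntegral F α) {a : F}
    (h : α′ = algebraMap F K a * α) :
    ((minpoly F α).coeff 0)′ = ((minpoly F α).natDegree * a) * (minpoly F α).coeff 0 := by
  set p := minpoly F α
  set m := p.natDegree
  set q := mapCoeffs p + C a * (X * derivative p - C (m : F) * p)
  have hq_coeff (j : ℕ) : q.coeff j = (p.coeff j)′ + a * ((j - m) * p.coeff j) := by
    simp only [q, coeff_add, coeff_mapCoeffs, coeff_C_mul, coeff_sub, coeff_X_mul_derivative]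
    ring
  have hq_aeval : aeval α q = 0 := by
    have hp : aeval α p = 0 := minpoly.aeval F α
    have := deriv_aeval_eq α p
    rw [hp, Derivation.map_zero, h] at this
    simp only [q, map_add, map_mul, map_sub, aeval_C, aeval_X, hp]
    linear_combination -this
  have hq_degree : q.degree < m := by
    refine (degree_lt_iff_coeff_zero q m).2 fun j hj ↦ ?_
    rcases hj.eq_or_lt with rfl | hlt
    · simp [hq_coeff, (minpoly.monic hα).coeff_natDegree, m, p]
    · simp [hq_coeff, coeff_eq_zero_of_natDegree_lt hlt]
  have hq : q = 0 := by
    by_contra hne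
    exact (minpoly.degree_le_of_ne_zero F α hne hq_aeval).not_gt
      (degree_eq_natDegree (minpoly.ne_zero hα) ▸ hq_degree)
  have := hq_coeff 0
  rw [hq, coeff_zero] at this
  linear_combination -this

theorem eq_zero_of_deriv_eq_nsmul [IsDomain K]
    (hF : ∀ (x : F) (n : ℕ), 0 < n → x′ = n • x → x = 0)
    {α : K} (hα : IsIntegral F α) {n : ℕ} (hn : 0 < n) (h : α′ = n • α) : α = 0 := by
  have h' : α′ = algebraMap F K n * α := by rw [h, map_natCast, nsmul_eq_mul]
  rw [← minpoly.coeff_zero_eq_zero hα]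
  refine hF _ ((minpoly F α).natDegree * n) (Nat.mul_pos (minpoly.natDegree_pos hα) hn) ?_
  rw [deriv_coeff_zero_minpoly hα h', nsmul_eq_mul, Nat.cast_mul]

end Differential

theorem no_nontrivial_solution_algebraicClosure_general {F : Type*} [Field F]
    (δ : Derivation ℤ F F)
    (d : Derivation ℤ (AlgebraicClosure F) (AlgebraicClosure F))
    (hext : ∀ a : F, d (algebraMap F (AlgebraicClosure F) a) =
      algebraMap F (AlgebraicClosure F) (δ a))
    (hF : ∀ (x : F) (n : ℕ), 0 < n → δ x = n • x → x = 0) :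
    ∀ (α : AlgebraicClosure F) (n : ℕ), 0 < n → d α = n • α → α = 0 := by
  let : Differential F := ⟨δ⟩
  let : Differential (AlgebraicClosure F) := ⟨d⟩
  have : DifferentialAlgebra F (AlgebraicClosure F) := ⟨hext⟩
  exact fun α _ hn ↦ eq_zero_of_deriv_eq_nsmul hF (Algebra.IsIntegral.isIntegral α) hn

/-- If a differential field `(F, δ)` of characteristic 0 has the same constants as its
algebraic closure (with the unique extended derivation) and `δx = n·x` has only the
trivial solution in `F` for every positive integer `n`, then the same holds in the
algebraic closure. -/
theorem no_nontrivial_solution_algebraicClosure {F : Type*} [Field F] [CharZero F]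
    (δ : Derivation ℤ F F)
    (d : Derivation ℤ (AlgebraicClosure F) (AlgebraicClosure F))
    (hext : ∀ a : F, d (algebraMap F (AlgebraicClosure F) a) =
      algebraMap F (AlgebraicClosure F) (δ a))
    (hconst : ∀ x : AlgebraicClosure F, d x = 0 →
      ∃ c : F, algebraMap F (AlgebraicClosure F) c = x)
    (hF : ∀ (x : F) (n : ℕ), 0 < n → δ x = n • x → x = 0) :
    ∀ (α : AlgebraicClosure F) (n : ℕ), 0 < n → d α = n • α → α = 0 :=
  no_nontrivial_solution_algebraicClosure_general δ d hext hF
end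

section
/- Let (K, δ) be a differential field of characteristic 0 and let K(X) be the field of rational functions in the entries of an n×n matrix X of indeterminates, with the derivation extending δ determined by δ(X) = A·X entrywise, for a fixed matrix A ∈ Mat_n(K). Then X ∈ GL_n(K(X)) and δ(X) = A·X, i.e., every linear matrix differential equation δZ = AZ has a fundamental (invertible) solution in some differential field extension of K. -/
/-!
On `K[X_ij]` take `δ` on coefficients plus the `K`-derivation with `X ↦ A·X`. It extends to the
fraction field `K(X)` because a localization is formally étale, so that `Ω[K(X)/ℤ]` is the base
change of `Ω[K[X]/ℤ]`. The generic matrix `X` has nonzero determinant, hence is invertible in `K(X)`.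
-/

universe u

namespace Derivation

open KaehlerDifferential

variable {R S T M : Type*} [CommRing R] [CommRing S] [CommRing T] [Algebra R S] [Algebra R T]
  [Algebra S T] [IsScalarTower R S T] [Algebra.FormallyEtale S T]
  [AddCommGroup M] [Module R M] [Module S M] [Module T M] [IsScalarTower R S M]
  [IsScalarTower S T M] [IsScalarTower R T M]

noncomputable def liftOfFormallyEtale (d : Derivation R S M) : Derivation R T M :=
  (d.liftKaehlerDifferential.liftBaseChange T ∘ₗ
    (tensorKaehlerEquivOfFormallyEtale R S T).symm.toLinearMap).compDer (D R T)

@[simp]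
theorem liftOfFormallyEtale_algebraMap (d : Derivation R S M) (s : S) :
    d.liftOfFormallyEtale (algebraMap S T s) = d s := by
  simp [liftOfFormallyEtale, tensorKaehlerEquivOfFormallyEtale_symm_D_algebraMap]

end Derivation

namespace MvPolynomial

variable {R A σ : Type*} [CommRing R] [CommRing A] [Algebra R A]

noncomputable def mapCoeffsLinearMap (f : A →ₗ[R] A) : MvPolynomial σ A →ₗ[R] MvPolynomial σ A :=
  (AddMonoidAlgebra.coeffLinearEquiv R).symm.toLinearMap ∘ₗ Finsupp.mapRange.linearMap f ∘ₗ
    (AddMonoidAlgebra.coeffLinearEquiv R).toLinearMap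

@[simp]
theorem mapCoeffsLinearMap_monomial (f : A →ₗ[R] A) (s : σ →₀ ℕ) (c : A) :
    mapCoeffsLinearMap f (monomial s c) = monomial s (f c) := by
  change AddMonoidAlgebra.ofCoeff (Finsupp.mapRange f f.map_zero (Finsupp.single s c)) = _
  rw [Finsupp.mapRange_single]
  rfl

theorem mapCoeffsLinearMap_leibniz (d : Derivation R A A) (p q : MvPolynomial σ A) :
    mapCoeffsLinearMap d.toLinearMap (p * q) =
      p • mapCoeffsLinearMap d.toLinearMap q + q • mapCoeffsLinearMap d.toLinearMap p := by
  induction p using induction_on' with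
  | add p p' hp hp' => simp only [add_mul, map_add, hp, hp', add_smul, smul_add]; abel
  | monomial s a =>
    induction q using induction_on' with
    | add q q' hq hq' => simp only [mul_add, map_add, hq, hq', add_smul, smul_add]; abel
    | monomial t b =>
      simp [monomial_mul, mul_comm]

noncomputable def mapCoeffsDerivation (d : Derivation R A A) :
    Derivation R (MvPolynomial σ A) (MvPolynomial σ A) :=
  Derivation.mk' (mapCoeffsLinearMap d.toLinearMap) (mapCoeffsLinearMap_leibniz d)

@[simp]
theorem mapCoeffsDerivation_monomial (d : Derivation R A A) (s : σ →₀ ℕ) (c : A) :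
    mapCoeffsDerivation d (monomial s c) = monomial s (d c) :=
  mapCoeffsLinearMap_monomial _ s c

@[simp]
theorem mapCoeffsDerivation_C (d : Derivation R A A) (a : A) :
    mapCoeffsDerivation d (C a : MvPolynomial σ A) = C (d a) :=
  mapCoeffsDerivation_monomial d 0 a

@[simp]
theorem mapCoeffsDerivation_X (d : Derivation R A A) (i : σ) :
    mapCoeffsDerivation d (X i : MvPolynomial σ A) = 0 := by
  simp [X]

noncomputable def extendDerivation (d : Derivation R A A) (v : σ → MvPolynomial σ A) :
    Derivation R (MvPolynomial σ A) (MvPolynomial σ A) :=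
  mapCoeffsDerivation d + (mkDerivation A v).restrictScalars R

@[simp]
theorem extendDerivation_C (d : Derivation R A A) (v : σ → MvPolynomial σ A) (a : A) :
    extendDerivation d v (C a) = C (d a) := by
  simp [extendDerivation, derivation_C]

@[simp]
theorem extendDerivation_X (d : Derivation R A A) (v : σ → MvPolynomial σ A) (i : σ) :
    extendDerivation d v (X i) = v i := by
  simp [extendDerivation]

end MvPolynomial

instance IsFractionRing.formallyEtale (R K : Type*) [CommRing R] [CommRing K] [Algebra R K]
    [IsFractionRing R K] : Algebra.FormallyEtale R K :=
  .of_isLocalization (nonZeroDivisors R)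

open MvPolynomial Matrix

section LinearSystem

variable {K ι : Type*} [CommRing K] [Fintype ι]

noncomputable def linearSystemDerivation (δ : Derivation ℤ K K) (A : Matrix ι ι K) :
    Derivation ℤ (MvPolynomial (ι × ι) K) (MvPolynomial (ι × ι) K) :=
  extendDerivation δ fun p =>
    (A.map C * mvPolynomialX ι ι K : Matrix ι ι (MvPolynomial (ι × ι) K)) p.1 p.2

variable (L : Type*) [CommRing L] [Algebra (MvPolynomial (ι × ι) K) L]
  [IsFractionRing (MvPolynomial (ι × ι) K) L] [Algebra K L]
  [IsScalarTower K (MvPolynomial (ι × ι) K) L]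

noncomputable def linearSystemDerivationOfFractions (δ : Derivation ℤ K K) (A : Matrix ι ι K) :
    Derivation ℤ L L :=
  ((Algebra.linearMap _ L).compDer (linearSystemDerivation δ A)).liftOfFormallyEtale

theorem linearSystemDerivationOfFractions_algebraMap (δ : Derivation ℤ K K) (A : Matrix ι ι K)
    (a : K) :
    linearSystemDerivationOfFractions L δ A (algebraMap K L a) = algebraMap K L (δ a) := by
  simp [linearSystemDerivationOfFractions, linearSystemDerivation,
    IsScalarTower.algebraMap_apply K (MvPolynomial (ι × ι) K) L]

theorem linearSystemDerivationOfFractions_mvPolynomialX (δ : Derivation ℤ K K)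
    (A : Matrix ι ι K) (i j : ι) :
    linearSystemDerivationOfFractions L δ A ((mvPolynomialX ι ι K).map (algebraMap _ L) i j) =
      (A.map (algebraMap K L) * (mvPolynomialX ι ι K).map (algebraMap _ L)) i j := by
  have hA : A.map (algebraMap K L) = (A.map C).map (algebraMap (MvPolynomial (ι × ι) K) L) := by
    rw [Matrix.map_map, ← algebraMap_eq, ← RingHom.coe_comp, ← IsScalarTower.algebraMap_eq]
  rw [hA, ← Matrix.map_mul]
  simp [linearSystemDerivationOfFractions, linearSystemDerivation]

end LinearSystem

theorem isUnit_det_map_mvPolynomialX {K ι : Type*} (L : Type*) [CommRing K] [Nontrivial K]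
    [Fintype ι] [DecidableEq ι] [Field L] [Algebra (MvPolynomial (ι × ι) K) L]
    [IsFractionRing (MvPolynomial (ι × ι) K) L] :
    IsUnit ((mvPolynomialX ι ι K).map (algebraMap _ L)).det := by
  rw [← RingHom.mapMatrix_apply, ← RingHom.map_det, isUnit_iff_ne_zero,
    map_ne_zero_iff _ (IsFractionRing.injective _ L)]
  exact det_mvPolynomialX_ne_zero ι K

theorem fundamental_solution_exists_general {K : Type u} [Field K]
    (δ : Derivation ℤ K K) (n : ℕ) (A : Matrix (Fin n) (Fin n) K) :
    ∃ (L : Type u) (_ : Field L) (_ : Algebra K L) (d : Derivation ℤ L L),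
      (∀ a : K, d (algebraMap K L a) = algebraMap K L (δ a)) ∧
      ∃ Z : Matrix (Fin n) (Fin n) L, IsUnit Z.det ∧
        ∀ i j, d (Z i j) = (A.map (algebraMap K L) * Z) i j :=
  ⟨FractionRing (MvPolynomial (Fin n × Fin n) K), inferInstance, inferInstance,
    linearSystemDerivationOfFractions _ δ A, linearSystemDerivationOfFractions_algebraMap _ δ A,
    _, isUnit_det_map_mvPolynomialX _, linearSystemDerivationOfFractions_mvPolynomialX _ δ A⟩

/-- Every linear matrix differential equation `δZ = A·Z` over a differential field
`(K, δ)` of characteristic 0 has a fundamental (invertible) solution in some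
differential field extension of `K` (e.g. the rational function field `K(X)` in the
entries of a matrix of indeterminates, with `δX = A·X`). -/
theorem fundamental_solution_exists {K : Type u} [Field K] [CharZero K]
    (δ : Derivation ℤ K K) (n : ℕ) (A : Matrix (Fin n) (Fin n) K) :
    ∃ (L : Type u) (_ : Field L) (_ : Algebra K L) (d : Derivation ℤ L L),
      (∀ a : K, d (algebraMap K L a) = algebraMap K L (δ a)) ∧
      ∃ Z : Matrix (Fin n) (Fin n) L, IsUnit Z.det ∧
        ∀ i j, d (Z i j) = (A.map (algebraMap K L) * Z) i j :=
  fundamental_solution_exists_general δ n A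
end

section
/- Let K ⊆ B be an extension of fields such that K is existentially closed in B. Then every finitely generated K-subalgebra A of B admits a K-algebra homomorphism A → K. -/
/-- If a field `K` is existentially closed in a field extension `B`, then every
finitely generated `K`-subalgebra `A` of `B` admits a `K`-algebra homomorphism
`A → K` (a `K`-rational point). -/
theorem exists_point_of_fg_subalgebra {K B : Type*} [Field K] [Field B] [Algebra K B]
    (hec : ∀ (n : ℕ) (Sys Ineqs : Finset (MvPolynomial (Fin n) K)),
      (∃ b : Fin n → B,
        (∀ P ∈ Sys, MvPolynomial.aeval b P = 0) ∧
        (∀ Q ∈ Ineqs, MvPolynomial.aeval b Q ≠ 0)) →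
      ∃ a : Fin n → K,
        (∀ P ∈ Sys, MvPolynomial.aeval a P = 0) ∧
        (∀ Q ∈ Ineqs, MvPolynomial.aeval a Q ≠ 0))
    (A : Subalgebra K B) (hA : A.FG) :
    Nonempty (A →ₐ[K] K) := by
  obtain ⟨s, hs⟩ := hA
  set n := s.card with hn
  set b : Fin n → B := fun i => (s.equivFin.symm i : B) with hb
  have hrange : Set.range b = (s : Set B) := by
    ext x
    constructor
    · rintro ⟨i, rfl⟩; exact (s.equivFin.symm i).2
    · intro hx; exact ⟨s.equivFin ⟨x, hx⟩, by simp [hb]⟩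
  have hadjoin : Algebra.adjoin K (Set.range b) = A := by rw [hrange, hs]
  have hmem : ∀ p : MvPolynomial (Fin n) K, MvPolynomial.aeval b p ∈ A := by
    intro p
    rw [← hadjoin, Algebra.adjoin_range_eq_range_aeval]
    exact ⟨p, rfl⟩
  set φ : MvPolynomial (Fin n) K →ₐ[K] A :=
    (MvPolynomial.aeval b).codRestrict A hmem with hφ
  have hφsurj : Function.Surjective φ := by
    rintro ⟨x, hx⟩
    rw [← hs, ← hrange, Algebra.adjoin_range_eq_range_aeval] at hx
    obtain ⟨p, hp⟩ := hx
    exact ⟨p, Subtype.ext hp⟩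
  -- the kernel is finitely generated (Hilbert basis theorem)
  have hker_fg : (RingHom.ker φ.toRingHom).FG := IsNoetherian.noetherian _
  obtain ⟨Sys, hSys⟩ := hker_fg
  -- the system has a solution in B
  have hsolB : ∃ bb : Fin n → B,
      (∀ P ∈ Sys, MvPolynomial.aeval bb P = 0) ∧
      (∀ Q ∈ (∅ : Finset (MvPolynomial (Fin n) K)), MvPolynomial.aeval bb Q ≠ 0) := by
    refine ⟨b, fun P hP => ?_, fun Q hQ => absurd hQ (Finset.notMem_empty Q)⟩
    have hPker : P ∈ RingHom.ker φ.toRingHom := by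
      rw [← hSys]; exact Ideal.subset_span hP
    have : φ P = 0 := hPker
    have := congrArg (Subtype.val) this
    simpa [hφ] using this
  obtain ⟨a, ha, -⟩ := hec n Sys ∅ hsolB
  set ψ : MvPolynomial (Fin n) K →ₐ[K] K := MvPolynomial.aeval a with hψ
  have hkerle : ∀ p ∈ RingHom.ker φ.toRingHom, ψ p = 0 := by
    intro p hp
    rw [← hSys] at hp
    have hle : Ideal.span (Sys : Set (MvPolynomial (Fin n) K)) ≤ RingHom.ker ψ.toRingHom := by
      rw [Ideal.span_le]
      intro q hq
      exact ha q hq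
    exact hle hp
  exact ⟨(Ideal.Quotient.liftₐ (RingHom.ker φ.toRingHom) ψ hkerle).comp
    (Ideal.quotientKerAlgEquivOfSurjective hφsurj).symm.toAlgHom⟩
end
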